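/- (Isometric decomposition of pure tripartite states with product marginal.) Let |ω_{ABC}⟩ be a pure state on finite-dimensional H_A ⊗ H_B ⊗ H_C whose reduced state satisfies ω_{AB} = ω_A ⊗ ω_B. Then there exist finite-dimensional Hilbert spaces H_{C₁}, H_{C₂}, an isometry V: H_C → H_{C₁} ⊗ H_{C₂}, and pure states |φ_{AC₁}⟩, |χ_{BC₂}⟩ that are purifications of ω_A and ω_B respectively, such that (𝟙_{AB} ⊗ V)|ω_{ABC}⟩ = |φ_{AC₁}⟩ ⊗ |χ_{BC₂}⟩. -/

import Mathlib

/-!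
Common definitions for quantum coordination networks:
density operators, purity, trace norm, von Neumann entropy, partial traces,
mutual information, CPTP maps (via the Choi matrix), tensor products and
application of channels to subsystems.
-/

noncomputable section
open scoped BigOperators ComplexOrder

namespace QCoord

variable {α β γ δ : Type*}

/-- A density operator: positive semidefinite with unit trace. -/
def IsDensity [Fintype α] (ρ : Matrix α α ℂ) : Prop :=
  ρ.PosSemidef ∧ ρ.trace = 1

/-- Outer product |v⟩⟨v| of a vector. -/
def outer [Fintype α] (v : α → ℂ) : Matrix α α ℂ :=
  Matrix.of fun i j => v i * star (v j)

/-- A pure state: a rank-one density operator. -/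
def IsPure [Fintype α] (ρ : Matrix α α ℂ) : Prop :=
  IsDensity ρ ∧ ∃ v : α → ℂ, ρ = outer v

/-- The trace norm ‖M‖₁ = tr √(Mᴴ M). -/
def traceNorm [Fintype α] [DecidableEq α] (M : Matrix α α ℂ) : ℝ :=
  ((Matrix.posSemidef_conjTranspose_mul_self M).1.eigenvectorUnitary.1 *
    Matrix.diagonal (((↑) : ℝ → ℂ) ∘ (√·) ∘ (Matrix.posSemidef_conjTranspose_mul_self M).1.eigenvalues) *
    (star (Matrix.posSemidef_conjTranspose_mul_self M).1.eigenvectorUnitary : Matrix α α ℂ)).trace.re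

/-- Von Neumann entropy in qubits (base-2), via eigenvalues; junk value 0 for
non-Hermitian inputs. -/
def entropy [Fintype α] [DecidableEq α] (ρ : Matrix α α ℂ) : ℝ :=
  if h : ρ.IsHermitian then
    -∑ i, (h.eigenvalues i) * Real.logb 2 (h.eigenvalues i)
  else 0

/-- Partial trace over the second (right) factor. -/
def ptrR [Fintype β] (ρ : Matrix (α × β) (α × β) ℂ) : Matrix α α ℂ :=
  Matrix.of fun i j => ∑ k, ρ (i, k) (j, k)

/-- Partial trace over the first (left) factor. -/
def ptrL [Fintype α] (ρ : Matrix (α × β) (α × β) ℂ) : Matrix β β ℂ :=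
  Matrix.of fun i j => ∑ k, ρ (k, i) (k, j)

/-- Quantum mutual information I(α;β)_ρ for a bipartite state. -/
def mutualInfo [Fintype α] [Fintype β] [DecidableEq α] [DecidableEq β]
    (ρ : Matrix (α × β) (α × β) ℂ) : ℝ :=
  entropy (ptrR ρ) + entropy (ptrL ρ) - entropy ρ

/-- Conditional entropy S(α|β)_ρ = S(αβ) - S(β). -/
def condEntropy [Fintype α] [Fintype β] [DecidableEq α] [DecidableEq β]
    (ρ : Matrix (α × β) (α × β) ℂ) : ℝ :=
  entropy ρ - entropy (ptrL ρ)

/-- Choi matrix of a linear map on matrices. -/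
def choi [Fintype α] [DecidableEq α]
    (Φ : Matrix α α ℂ →ₗ[ℂ] Matrix β β ℂ) : Matrix (α × β) (α × β) ℂ :=
  Matrix.of fun p q => Φ (Matrix.single p.1 q.1 1) p.2 q.2

/-- CPTP (quantum channel): completely positive (PSD Choi matrix) and
trace-preserving. -/
def IsCPTP [Fintype α] [DecidableEq α] [Fintype β]
    (Φ : Matrix α α ℂ →ₗ[ℂ] Matrix β β ℂ) : Prop :=
  (choi Φ).PosSemidef ∧ ∀ ρ : Matrix α α ℂ, (Φ ρ).trace = ρ.trace

/-- Tensor (Kronecker) product of two square matrices. -/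
def tens (X : Matrix α α ℂ) (Y : Matrix β β ℂ) : Matrix (α × β) (α × β) ℂ :=
  Matrix.of fun p q => X p.1 q.1 * Y p.2 q.2

/-- Extension Φ ⊗ id of a channel by an identity on a spectator system. -/
def extR (Φ : Matrix α α ℂ →ₗ[ℂ] Matrix β β ℂ)
    (ρ : Matrix (α × γ) (α × γ) ℂ) : Matrix (β × γ) (β × γ) ℂ :=
  Matrix.of fun p q => Φ (Matrix.of fun i j => ρ (i, p.2) (j, q.2)) p.1 q.1

/-- Apply a channel to the subsystem identified by the equivalence `e`. -/
def applyOn {ε' : Type*} (e : δ ≃ α × γ)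
    (Φ : Matrix α α ℂ →ₗ[ℂ] Matrix ε' ε' ℂ)
    (ρ : Matrix δ δ ℂ) : Matrix (ε' × γ) (ε' × γ) ℂ :=
  extR Φ (Matrix.reindex e e ρ)

/-- n-fold tensor power of a square matrix. -/
def tpow [Fintype α] (ρ : Matrix α α ℂ) (n : ℕ) :
    Matrix (Fin n → α) (Fin n → α) ℂ :=
  Matrix.of fun i j => ∏ k, ρ (i k) (j k)

end QCoord

/-! ### The cascade network -/

namespace QCoord

/-- Reordering for Bob's encoding step in the cascade network. -/
def eBob {An M1 TB1 TB2 TC : Type*} :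
    (((An × M1) × TB1) × (TB2 × TC)) ≃ ((M1 × TB1 × TB2) × (An × TC)) where
  toFun x := ((x.1.1.2, x.1.2, x.2.1), (x.1.1.1, x.2.2))
  invFun y := (((y.2.1, y.1.1), y.1.2.1), (y.1.2.2, y.2.2))
  left_inv _ := rfl
  right_inv _ := rfl

/-- Reordering for Charlie's encoding step in the cascade network. -/
def eCharlie {Bn M2 An TC : Type*} :
    ((Bn × M2) × (An × TC)) ≃ ((M2 × TC) × (An × Bn)) where
  toFun x := ((x.1.2, x.2.2), (x.2.1, x.1.1))
  invFun y := ((y.2.2, y.1.1), (y.2.1, y.1.2))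
  left_inv _ := rfl
  right_inv _ := rfl

/-- Final reordering to (Aⁿ, Bⁿ, Cⁿ). -/
def eFin {Cn An Bn : Type*} : (Cn × (An × Bn)) ≃ (An × Bn × Cn) where
  toFun x := (x.2.1, x.2.2, x.1)
  invFun y := (y.2.2, (y.1, y.2.1))
  left_inv _ := rfl
  right_inv _ := rfl

variable {A B C R : Type*}

/-- n-fold tensor power of a tripartite state, indexed by
(Fin n → A) × (Fin n → B) × (Fin n → C). -/
def prodPow3 [Fintype A] [Fintype B] [Fintype C]
    (ω : Matrix (A × B × C) (A × B × C) ℂ) (n : ℕ) :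
    Matrix ((Fin n → A) × (Fin n → B) × (Fin n → C))
      ((Fin n → A) × (Fin n → B) × (Fin n → C)) ℂ :=
  Matrix.of fun p q =>
    ∏ k, ω (p.1 k, p.2.1 k, p.2.2 k) (q.1 k, q.2.1 k, q.2.2 k)

/-- n-fold tensor power of a four-partite state. -/
def prodPow4 [Fintype R] [Fintype A] [Fintype B] [Fintype C]
    (ωR : Matrix (R × A × B × C) (R × A × B × C) ℂ) (n : ℕ) :
    Matrix ((Fin n → R) × (Fin n → A) × (Fin n → B) × (Fin n → C))
      ((Fin n → R) × (Fin n → A) × (Fin n → B) × (Fin n → C)) ℂ :=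
  Matrix.of fun p q =>
    ∏ k, ωR (p.1 k, p.2.1 k, p.2.2.1 k, p.2.2.2 k)
      (q.1 k, q.2.1 k, q.2.2.1 k, q.2.2.2 k)

/-- Marginal ω_{BC} of a tripartite state. -/
def mBC [Fintype A] (ω : Matrix (A × B × C) (A × B × C) ℂ) :
    Matrix (B × C) (B × C) ℂ :=
  Matrix.of fun p q => ∑ a, ω (a, p.1, p.2) (a, q.1, q.2)

/-- Marginal ω_C of a tripartite state. -/
def mC [Fintype A] [Fintype B] (ω : Matrix (A × B × C) (A × B × C) ℂ) :
    Matrix C C ℂ :=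
  Matrix.of fun c c' => ∑ a, ∑ b, ω (a, b, c) (a, b, c')

/-- Marginal on ((B×C), R) of a purified state ω_{RABC}, arranged for I(BC;R). -/
def mBC_R [Fintype A] (ωR : Matrix (R × A × B × C) (R × A × B × C) ℂ) :
    Matrix ((B × C) × R) ((B × C) × R) ℂ :=
  Matrix.of fun p q => ∑ a, ωR (p.2, a, p.1.1, p.1.2) (q.2, a, q.1.1, q.1.2)

/-- Marginal on (C, (R×A)) of a purified state ω_{RABC}, arranged for I(C;RA). -/
def mC_RA [Fintype B] (ωR : Matrix (R × A × B × C) (R × A × B × C) ℂ) :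
    Matrix (C × (R × A)) (C × (R × A)) ℂ :=
  Matrix.of fun p q => ∑ b, ωR (p.2.1, p.2.2, b, p.1) (q.2.1, q.2.2, b, q.1)

variable (A B C) in
/-- A (2^ℓ₁, 2^ℓ₂, 2^k₁, 2^k₂, n) coordination code for the cascade network:
pre-shared entangled pure states Ψ (Alice–Bob) and Θ (Bob–Charlie) of Schmidt
ranks 2^{k₁}, 2^{k₂}, and CPTP encoders for Alice, Bob and Charlie with quantum
messages of dimensions 2^{ℓ₁}, 2^{ℓ₂}. -/
structure CascadeCode [Fintype A] [DecidableEq A] [Fintype B] [DecidableEq B]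
    [Fintype C] [DecidableEq C] (ℓ₁ ℓ₂ k₁ k₂ n : ℕ) where
  Ψ : Matrix (Fin (2 ^ k₁) × Fin (2 ^ k₁)) (Fin (2 ^ k₁) × Fin (2 ^ k₁)) ℂ
  Ψ_pure : IsPure Ψ
  Θ : Matrix (Fin (2 ^ k₂) × Fin (2 ^ k₂)) (Fin (2 ^ k₂) × Fin (2 ^ k₂)) ℂ
  Θ_pure : IsPure Θ
  EncA : Matrix (Fin (2 ^ k₁)) (Fin (2 ^ k₁)) ℂ →ₗ[ℂ]
    Matrix ((Fin n → A) × Fin (2 ^ ℓ₁)) ((Fin n → A) × Fin (2 ^ ℓ₁)) ℂ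
  EncA_cptp : IsCPTP EncA
  EncB : Matrix (Fin (2 ^ ℓ₁) × Fin (2 ^ k₁) × Fin (2 ^ k₂))
      (Fin (2 ^ ℓ₁) × Fin (2 ^ k₁) × Fin (2 ^ k₂)) ℂ →ₗ[ℂ]
    Matrix ((Fin n → B) × Fin (2 ^ ℓ₂)) ((Fin n → B) × Fin (2 ^ ℓ₂)) ℂ
  EncB_cptp : IsCPTP EncB
  Dec : Matrix (Fin (2 ^ ℓ₂) × Fin (2 ^ k₂)) (Fin (2 ^ ℓ₂) × Fin (2 ^ k₂)) ℂ →ₗ[ℂ]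
    Matrix (Fin n → C) (Fin n → C) ℂ
  Dec_cptp : IsCPTP Dec

/-- Output state ρ̂_{AⁿBⁿCⁿ} of a cascade coordination code: Alice applies her
encoder to her share of Ψ, Bob applies his encoder to (M₁, T_B', T_B''), and
Charlie applies his to (M₂, T_C). -/
def cascadeOutput [Fintype A] [DecidableEq A] [Fintype B] [DecidableEq B]
    [Fintype C] [DecidableEq C] {ℓ₁ ℓ₂ k₁ k₂ n : ℕ}
    (code : CascadeCode A B C ℓ₁ ℓ₂ k₁ k₂ n) :
    Matrix ((Fin n → A) × (Fin n → B) × (Fin n → C))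
      ((Fin n → A) × (Fin n → B) × (Fin n → C)) ℂ :=
  let ρ1 := extR code.EncA code.Ψ
  let ρ2 := applyOn eBob code.EncB (tens ρ1 code.Θ)
  let ρ3 := applyOn eCharlie code.Dec ρ2
  Matrix.reindex eFin eFin ρ3

/-- Achievability of a rate tuple (Q₁, Q₂, E₁, E₂) for coordination in the
cascade network: for every ε, δ > 0 and all sufficiently large n there is a
(2^{n(Q₁+δ)}, 2^{n(Q₂+δ)}, 2^{n(E₁+δ)}, 2^{n(E₂+δ)}, n) coordination code whose
output is ε-close to ω^{⊗n} in trace norm. -/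
def CascadeAchievable [Fintype A] [DecidableEq A] [Fintype B] [DecidableEq B]
    [Fintype C] [DecidableEq C] (ω : Matrix (A × B × C) (A × B × C) ℂ)
    (Q₁ Q₂ E₁ E₂ : ℝ) : Prop :=
  ∀ ε > (0 : ℝ), ∀ δ > (0 : ℝ), ∃ N : ℕ, ∀ n ≥ N,
    ∃ ℓ₁ ℓ₂ k₁ k₂ : ℕ,
      (ℓ₁ : ℝ) ≤ n * (Q₁ + δ) ∧ (ℓ₂ : ℝ) ≤ n * (Q₂ + δ) ∧
      (k₁ : ℝ) ≤ n * (E₁ + δ) ∧ (k₂ : ℝ) ≤ n * (E₂ + δ) ∧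
      ∃ code : CascadeCode A B C ℓ₁ ℓ₂ k₁ k₂ n,
        traceNorm (cascadeOutput code - prodPow3 ω n) ≤ ε

end QCoord

/-! ### The multiple-access network -/

namespace QCoord

variable {A B C C1 C2 : Type*}

/-- Marginal ω_A of a tripartite state. -/
def mA3 [Fintype B] [Fintype C] (ω : Matrix (A × B × C) (A × B × C) ℂ) :
    Matrix A A ℂ :=
  Matrix.of fun a a' => ∑ b, ∑ c, ω (a, b, c) (a', b, c)

/-- Marginal ω_B of a tripartite state. -/
def mB3 [Fintype A] [Fintype C] (ω : Matrix (A × B × C) (A × B × C) ℂ) :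
    Matrix B B ℂ :=
  Matrix.of fun b b' => ∑ a, ∑ c, ω (a, b, c) (a, b', c)

/-- Marginal ω_{AB} of a tripartite state. -/
def mAB3 [Fintype C] (ω : Matrix (A × B × C) (A × B × C) ℂ) :
    Matrix (A × B) (A × B) ℂ :=
  Matrix.of fun p q => ∑ c, ω (p.1, p.2, c) (q.1, q.2, c)

variable (A B C) in
/-- A (2^ℓ₁, 2^ℓ₂, n) coordination code for the multiple-access network:
CPTP encoders for Alice and Bob and a CPTP decoder for Charlie acting on the
two quantum descriptions. -/
structure MACCode [Fintype A] [DecidableEq A] [Fintype B] [DecidableEq B]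
    [Fintype C] [DecidableEq C] (ℓ₁ ℓ₂ n : ℕ) where
  EncA : Matrix (Fin n → A) (Fin n → A) ℂ →ₗ[ℂ]
    Matrix ((Fin n → A) × Fin (2 ^ ℓ₁)) ((Fin n → A) × Fin (2 ^ ℓ₁)) ℂ
  EncA_cptp : IsCPTP EncA
  EncB : Matrix (Fin n → B) (Fin n → B) ℂ →ₗ[ℂ]
    Matrix ((Fin n → B) × Fin (2 ^ ℓ₂)) ((Fin n → B) × Fin (2 ^ ℓ₂)) ℂ
  EncB_cptp : IsCPTP EncB
  Dec : Matrix (Fin (2 ^ ℓ₁) × Fin (2 ^ ℓ₂)) (Fin (2 ^ ℓ₁) × Fin (2 ^ ℓ₂)) ℂ →ₗ[ℂ]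
    Matrix (Fin n → C) (Fin n → C) ℂ
  Dec_cptp : IsCPTP Dec

section mac

variable [Fintype A] [DecidableEq A] [Fintype B] [DecidableEq B]
  [Fintype C] [DecidableEq C] {ℓ₁ ℓ₂ n : ℕ}

/-- Output state ρ̂_{AⁿBⁿCⁿ} of a multiple-access coordination code:
ρ̂ = (id ⊗ D)(E(ω_A^{⊗n}) ⊗ F(ω_B^{⊗n})). -/
def macOutput (ω : Matrix (A × B × C) (A × B × C) ℂ)
    (code : MACCode A B C ℓ₁ ℓ₂ n) :
    Matrix ((Fin n → A) × (Fin n → B) × (Fin n → C))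
      ((Fin n → A) × (Fin n → B) × (Fin n → C)) ℂ :=
  let ρ1 := code.EncA (tpow (mA3 ω) n)
  let ρ2 := code.EncB (tpow (mB3 ω) n)
  let ρ3 := applyOn
    (⟨fun x => ((x.1.2, x.2.2), (x.1.1, x.2.1)),
      fun y => ((y.2.1, y.1.1), (y.2.2, y.1.2)),
      fun _ => rfl, fun _ => rfl⟩ :
      (((Fin n → A) × Fin (2 ^ ℓ₁)) × ((Fin n → B) × Fin (2 ^ ℓ₂))) ≃
        ((Fin (2 ^ ℓ₁) × Fin (2 ^ ℓ₂)) × ((Fin n → A) × (Fin n → B))))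
    code.Dec (tens ρ1 ρ2)
  Matrix.reindex eFin eFin ρ3

/-- The reduced output state of a multiple-access code on (Aⁿ, Bⁿ). -/
def macOutputAB (ω : Matrix (A × B × C) (A × B × C) ℂ)
    (code : MACCode A B C ℓ₁ ℓ₂ n) :
    Matrix ((Fin n → A) × (Fin n → B)) ((Fin n → A) × (Fin n → B)) ℂ :=
  Matrix.of fun p q => ∑ cn : Fin n → C,
    macOutput ω code (p.1, p.2, cn) (q.1, q.2, cn)

/-- Achievability of a rate pair (Q₁, Q₂) for coordination in the
multiple-access network. -/
def MACAchievable (ω : Matrix (A × B × C) (A × B × C) ℂ) (Q₁ Q₂ : ℝ) : Prop :=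
  ∀ ε > (0 : ℝ), ∀ δ > (0 : ℝ), ∃ N : ℕ, ∀ n ≥ N,
    ∃ ℓ₁ ℓ₂ : ℕ, (ℓ₁ : ℝ) ≤ n * (Q₁ + δ) ∧ (ℓ₂ : ℝ) ≤ n * (Q₂ + δ) ∧
      ∃ code : MACCode A B C ℓ₁ ℓ₂ n,
        traceNorm (macOutput ω code - prodPow3 ω n) ≤ ε

end mac

/-- Marginal state on C₁ of the purification |φ_{AC₁}⟩. -/
def margC1 [Fintype A] (φ : A × C1 → ℂ) : Matrix C1 C1 ℂ :=
  Matrix.of fun c c' => ∑ a, φ (a, c) * star (φ (a, c'))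

/-- Marginal state on C₂ of the purification |χ_{BC₂}⟩. -/
def margC2 [Fintype B] (χ : B × C2 → ℂ) : Matrix C2 C2 ℂ :=
  Matrix.of fun c c' => ∑ b, χ (b, c) * star (χ (b, c'))

end QCoord

/-!
The hypothesis `ω_{AB} = ω_A ⊗ ω_B` says that `|ω⟩` and `|φ⟩ ⊗ |χ⟩`, for any purifications `φ` of
`ω_A` and `χ` of `ω_B`, are two purifications of the same state on `AB`. Writing them as matrices
`M : AB × C` and `N : AB × (C₁ × C₂)` with `M Mᴴ = N Nᴴ = G`, the map `T = Mᴴ G⁺ N` (with `G⁺` the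
Moore–Penrose inverse) is a partial isometry carrying `M` to `N`, and it is completed to an isometry
by sending the complement of the support of `ω_C` into an extra block of `C₁` on which `φ` vanishes.
-/

namespace Matrix

open scoped Kronecker MatrixOrder

variable {𝕜 X C D E : Type*} [RCLike 𝕜] [Fintype X] [DecidableEq X] [Fintype C] [DecidableEq C]
  [Fintype D] [Fintype E]

/-- Since `0⁻¹ = 0` in `ℝ`, this inverts the nonzero eigenvalues and vanishes on the kernel: it is
the Moore–Penrose inverse of a Hermitian matrix. -/
def hermitianPinv (G : Matrix X X 𝕜) : Matrix X X 𝕜 := cfc (·⁻¹ : ℝ → ℝ) G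

lemma conjTranspose_hermitianPinv (G : Matrix X X 𝕜) : (hermitianPinv G)ᴴ = hermitianPinv G :=
  (IsSelfAdjoint.cfc : IsSelfAdjoint (hermitianPinv G)).star_eq

lemma cfc_mul_cfc_mul_cfc (f g h : ℝ → ℝ) (G : Matrix X X 𝕜) :
    cfc f G * cfc g G * cfc h G = cfc (fun x => f x * g x * h x) G := by
  have hc (f : ℝ → ℝ) : ContinuousOn f (spectrum ℝ G) := G.finite_real_spectrum.continuousOn f
  rw [cfc_mul _ _ G (hc _) (hc _), cfc_mul _ _ G (hc _) (hc _)]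

lemma hermitianPinv_mul_self_mul_hermitianPinv {G : Matrix X X 𝕜} (hG : IsSelfAdjoint G) :
    hermitianPinv G * G * hermitianPinv G = hermitianPinv G := calc
  _ = cfc (·⁻¹ : ℝ → ℝ) G * cfc id G * cfc (·⁻¹ : ℝ → ℝ) G := by rw [hermitianPinv, cfc_id ℝ G]
  _ = hermitianPinv G := by
    rw [cfc_mul_cfc_mul_cfc]
    exact cfc_congr fun x _ => by simpa using mul_inv_mul_cancel x⁻¹

lemma self_mul_hermitianPinv_mul_self {G : Matrix X X 𝕜} (hG : IsSelfAdjoint G) :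
    G * hermitianPinv G * G = G := calc
  _ = cfc id G * cfc (·⁻¹ : ℝ → ℝ) G * cfc id G := by rw [hermitianPinv, cfc_id ℝ G]
  _ = G := by
    rw [cfc_mul_cfc_mul_cfc]
    conv_rhs => rw [← cfc_id ℝ G]
    exact cfc_congr fun (x : ℝ) _ => mul_inv_mul_cancel x

lemma mul_conjTranspose_mul_hermitianPinv_mul (N : Matrix X D 𝕜) :
    N * Nᴴ * hermitianPinv (N * Nᴴ) * N = N := by
  have hGPG := self_mul_hermitianPinv_mul_self (isHermitian_mul_conjTranspose_self N)
  set R := N - N * Nᴴ * hermitianPinv (N * Nᴴ) * N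
  suffices R * Rᴴ = 0 by
    rw [self_mul_conjTranspose_eq_zero, sub_eq_zero] at this
    exact this.symm
  have hexpand : R * Rᴴ = N * Nᴴ - N * Nᴴ * hermitianPinv (N * Nᴴ) * (N * Nᴴ)
      - N * Nᴴ * hermitianPinv (N * Nᴴ) * (N * Nᴴ)
      + N * Nᴴ * hermitianPinv (N * Nᴴ) * (N * Nᴴ) * hermitianPinv (N * Nᴴ) * (N * Nᴴ) := by
    simp only [R, conjTranspose_sub, conjTranspose_mul, conjTranspose_hermitianPinv,
      conjTranspose_conjTranspose, Matrix.sub_mul, Matrix.mul_sub, Matrix.mul_assoc]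
    abel
  rw [hexpand, hGPG, hGPG]
  abel

/-- Purifications with the same reduced state are related by an isometry (`Tᵀ`), provided the
target has room (`J`) for the complement of the support of the source. -/
theorem exists_coisometry_mul_eq_fromCols {M : Matrix X C 𝕜} {N : Matrix X D 𝕜}
    (hMN : M * Mᴴ = N * Nᴴ) {J : Matrix C E 𝕜} (hJ : J * Jᴴ = 1) :
    ∃ T : Matrix C (D ⊕ E) 𝕜, T * Tᴴ = 1 ∧ M * T = fromCols N 0 := by
  set G := hermitianPinv (M * Mᴴ)
  set P := Mᴴ * G * M
  have hGMG : G * (M * Mᴴ) * G = G :=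
    hermitianPinv_mul_self_mul_hermitianPinv (isHermitian_mul_conjTranspose_self M)
  have hPP : P * P = P := by
    calc P * P = Mᴴ * (G * (M * Mᴴ) * G) * M := by simp only [P, Matrix.mul_assoc]
      _ = P := by rw [hGMG]
  have hPH : Pᴴ = P := by
    simp only [P, conjTranspose_mul, conjTranspose_conjTranspose, G, conjTranspose_hermitianPinv,
      Matrix.mul_assoc]
  have hMP : M * P = M := by
    simpa only [P, Matrix.mul_assoc] using mul_conjTranspose_mul_hermitianPinv_mul M
  refine ⟨fromCols (Mᴴ * G * N) ((1 - P) * J), ?_, ?_⟩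
  · have hT₁ : Mᴴ * G * N * (Mᴴ * G * N)ᴴ = P := by
      calc Mᴴ * G * N * (Mᴴ * G * N)ᴴ = Mᴴ * (G * (N * Nᴴ) * G) * M := by
            simp only [conjTranspose_mul, conjTranspose_conjTranspose, G,
              conjTranspose_hermitianPinv, Matrix.mul_assoc]
        _ = P := by rw [← hMN, hGMG]
    have hT₂ : (1 - P) * J * ((1 - P) * J)ᴴ = 1 - P := by
      rw [conjTranspose_mul, Matrix.mul_assoc, ← Matrix.mul_assoc J, hJ, Matrix.one_mul,
        conjTranspose_sub, conjTranspose_one, hPH, Matrix.sub_mul, Matrix.one_mul,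
        Matrix.mul_sub, Matrix.mul_one, hPP, sub_self, sub_zero]
    rw [conjTranspose_fromCols_eq_fromRows_conjTranspose, fromCols_mul_fromRows, hT₁, hT₂,
      add_sub_cancel]
  · have hN : M * (Mᴴ * G * N) = N := by
      simpa only [← hMN, Matrix.mul_assoc] using mul_conjTranspose_mul_hermitianPinv_mul N
    rw [mul_fromCols, hN, ← Matrix.mul_assoc, Matrix.mul_sub, Matrix.mul_one, hMP, sub_self,
      Matrix.zero_mul]

lemma PosSemidef.exists_mul_conjTranspose_eq {ρ : Matrix X X 𝕜} (hρ : ρ.PosSemidef) :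
    ∃ Φ : Matrix X X 𝕜, Φ * Φᴴ = ρ := by
  refine ⟨CFC.sqrt ρ, ?_⟩
  rw [← star_eq_conjTranspose, (CFC.sqrt_nonneg ρ).isSelfAdjoint.star_eq]
  exact CFC.sqrt_mul_sqrt_self ρ hρ.nonneg

lemma fromCols_zero_kronecker {R A A' B B' C : Type*} [CommSemiring R] (Φ : Matrix A A' R)
    (Χ : Matrix B B' R) :
    fromCols Φ (0 : Matrix A C R) ⊗ₖ Χ =
      (fromCols (Φ ⊗ₖ Χ) 0).submatrix id (Equiv.sumProdDistrib A' C B') := by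
  ext x ⟨y | k, j⟩ <;> simp

end Matrix

namespace QCoord

open Matrix
open scoped Kronecker

variable {A B C : Type*} [Fintype A] [Fintype B] [Fintype C]

lemma posSemidef_mA3_outer (u : A × B × C → ℂ) : (mA3 (outer u)).PosSemidef := by
  convert posSemidef_self_mul_conjTranspose (of fun a (x : B × C) => u (a, x.1, x.2))
  ext a a'
  simp [mA3, outer, mul_apply, Fintype.sum_prod_type]

lemma posSemidef_mB3_outer (u : A × B × C → ℂ) : (mB3 (outer u)).PosSemidef := by
  convert posSemidef_self_mul_conjTranspose (of fun b (x : A × C) => u (x.1, b, x.2))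
  ext b b'
  simp [mB3, outer, mul_apply, Fintype.sum_prod_type]

lemma mAB3_outer_eq_mul_conjTranspose (u : A × B × C → ℂ) :
    mAB3 (outer u) =
      of (fun x c => u (x.1, x.2, c)) * (of fun (x : A × B) c => u (x.1, x.2, c))ᴴ := by
  ext x y
  simp [mAB3, outer, mul_apply]

lemma exists_coisometry_mul_eq_fromCols_kronecker [DecidableEq A] [DecidableEq B] [DecidableEq C]
    (j₀ : B) (u : A × B × C → ℂ)
    (hprod : mAB3 (outer u) = tens (mA3 (outer u)) (mB3 (outer u))) :
    ∃ (Φ : Matrix A A ℂ) (Χ : Matrix B B ℂ) (T : Matrix C ((A ⊕ C) × B) ℂ),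
      Φ * Φᴴ = mA3 (outer u) ∧ Χ * Χᴴ = mB3 (outer u) ∧ T * Tᴴ = 1 ∧
      of (fun x c => u (x.1, x.2, c)) * T = fromCols Φ 0 ⊗ₖ Χ := by
  obtain ⟨Φ, hΦ⟩ := (posSemidef_mA3_outer u).exists_mul_conjTranspose_eq
  obtain ⟨Χ, hΧ⟩ := (posSemidef_mB3_outer u).exists_mul_conjTranspose_eq
  have hgram : of (fun x c => u (x.1, x.2, c)) * (of fun (x : A × B) c => u (x.1, x.2, c))ᴴ =
      (Φ ⊗ₖ Χ) * (Φ ⊗ₖ Χ)ᴴ := by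
    rw [← mAB3_outer_eq_mul_conjTranspose, hprod, conjTranspose_kronecker, ← mul_kronecker_mul,
      hΦ, hΧ]
    rfl
  set J : Matrix C (C × B) ℂ := of fun c p => if p = (c, j₀) then 1 else 0
  have hJ : J * Jᴴ = 1 := by
    ext c c'
    simp [J, mul_apply, one_apply, eq_comm]
  obtain ⟨T, hT, hMT⟩ := exists_coisometry_mul_eq_fromCols hgram hJ
  refine ⟨Φ, Χ, T.submatrix id (Equiv.sumProdDistrib A C B), hΦ, hΧ, ?_, ?_⟩
  · rw [conjTranspose_submatrix, submatrix_mul_equiv, hT, submatrix_id_id]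
  · rw [fromCols_zero_kronecker, ← hMT]
    simpa using submatrix_mul_equiv (of fun (x : A × B) c => u (x.1, x.2, c)) T id
      (Equiv.refl C) (Equiv.sumProdDistrib A C B)

/-- **Isometric decomposition of pure tripartite states with product
marginal.**  If |ω_{ABC}⟩ is pure with ω_{AB} = ω_A ⊗ ω_B, then there are
finite-dimensional spaces H_{C₁}, H_{C₂}, an isometry V : H_C → H_{C₁}⊗H_{C₂}
and purifications |φ_{AC₁}⟩ of ω_A and |χ_{BC₂}⟩ of ω_B with
(𝟙_{AB} ⊗ V)|ω_{ABC}⟩ = |φ_{AC₁}⟩ ⊗ |χ_{BC₂}⟩. -/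
theorem pure_tripartite_product_marginal_decomposition
    {A B C : Type} [Fintype A] [DecidableEq A] [Fintype B] [DecidableEq B]
    [Fintype C] [DecidableEq C]
    (u : A × B × C → ℂ) (hu : ∑ s, u s * star (u s) = 1)
    (hprod : mAB3 (outer u) = tens (mA3 (outer u)) (mB3 (outer u))) :
    ∃ (d₁ d₂ : ℕ) (V : Matrix (Fin d₁ × Fin d₂) C ℂ)
      (φ : A × Fin d₁ → ℂ) (χ : B × Fin d₂ → ℂ),
      V.conjTranspose * V = 1 ∧
      (∀ a a', (∑ c₁, φ (a, c₁) * star (φ (a', c₁))) = mA3 (outer u) a a') ∧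
      (∀ b b', (∑ c₂, χ (b, c₂) * star (χ (b', c₂))) = mB3 (outer u) b b') ∧
      (∀ a b c₁ c₂,
        (∑ c, V (c₁, c₂) c * u (a, b, c)) = φ (a, c₁) * χ (b, c₂)) := by
  obtain ⟨j₀⟩ : Nonempty B := by
    by_contra! hB
    simp at hu
  obtain ⟨Φ, Χ, T, hΦ, hΧ, hT, hMT⟩ := exists_coisometry_mul_eq_fromCols_kronecker j₀ u hprod
  let E₁ := (Fintype.equivFin (A ⊕ C)).symm
  let E₂ := (Fintype.equivFin B).symm
  refine ⟨_, _, (T.submatrix id (E₁.prodCongr E₂))ᵀ, fun p => fromCols Φ 0 p.1 (E₁ p.2),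
    fun p => Χ p.1 (E₂ p.2), ?_, ?_, ?_, ?_⟩
  · rw [conjTranspose_transpose_eq_transpose_conjTranspose, ← transpose_mul,
      conjTranspose_submatrix, submatrix_mul_equiv, hT, submatrix_id_id, transpose_one]
  · intro a a'
    rw [← hΦ, mul_apply]
    exact (E₁.sum_comp fun y => fromCols Φ 0 a y * star (fromCols Φ 0 a' y)).trans
      (by simp [Fintype.sum_sum_type])
  · intro b b'
    rw [← hΧ, mul_apply]
    exact E₂.sum_comp fun y => Χ b y * star (Χ b' y)
  · intro a b c₁ c₂
    simpa [mul_apply, mul_comm (T _ _)] using congr_fun (congr_fun hMT (a, b)) (E₁ c₁, E₂ c₂)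

end QCoord
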